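/- Let A be a metric space, and α₁, α₂ isometric involutions of A. Suppose X₁, X₂, P₁, P₂ are pairwise disjoint finite subsets of A such that α_i(X_i) = X_i and α_i(P₁) = P₂ for i = 1, 2. Then C₁ = X₁ ∪ X₂ ∪ P₁ and C₂ = X₁ ∪ X₂ ∪ P₂ are homometric: the multisets {d(x,y) : x,y ∈ C₁, unordered pairs} and {d(x,y) : x,y ∈ C₂} are equal. -/

import Mathlib

/-!
Split `C = X ∪ P` with `X = X₁ ∪ X₂` (for `P = P₁` or `P₂`): the distances of `C` are those
within `X`, those within `P`, and those between `P` and `X₁` or `X₂`. The first kind does not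
depend on `P`; the others are carried from `P₁` to `P₂` by the isometry `α₁` (within `P₁`, and
between `P₁` and `X₁`) or `α₂` (between `P₁` and `X₂`), each of which fixes the relevant `X_i`.
-/

open Finset

/-- The multiset of pairwise distances of a finite subset of a metric space,
over (ordered versions of) unordered pairs of distinct points. -/
noncomputable def distMultiset {A : Type*} [MetricSpace A] [DecidableEq A] (C : Finset A) : Multiset ℝ :=
  ((C ×ˢ C).filter fun p => p.1 ≠ p.2).val.map fun p => dist p.1 p.2

theorem Finset.image_prodMap_offDiag {α β : Type*} [DecidableEq β] {f : α → β}
    (hf : Function.Injective f) (s : Finset α) :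
    s.offDiag.image (Prod.map f f) = (s.image f).offDiag := by
  ext ⟨x, y⟩
  simp only [mem_image, mem_offDiag, ne_eq, Prod.exists, Prod.map_apply, Prod.mk.injEq]
  grind

section PairDistMultiset

variable {A B : Type*} [MetricSpace A] [MetricSpace B]

noncomputable def pairDistMultiset (S : Finset (A × A)) : Multiset ℝ :=
  S.val.map fun p => dist p.1 p.2

theorem pairDistMultiset_union [DecidableEq A] {S T : Finset (A × A)} (h : Disjoint S T) :
    pairDistMultiset (S ∪ T) = pairDistMultiset S + pairDistMultiset T := by
  rw [pairDistMultiset, ← disjUnion_eq_union S T h, disjUnion_val, Multiset.map_add]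
  rfl

theorem pairDistMultiset_image_prodMap [DecidableEq B] {f : A → B} (hf : Isometry f)
    (S : Finset (A × A)) : pairDistMultiset (S.image (Prod.map f f)) = pairDistMultiset S := by
  rw [pairDistMultiset, image_val_of_injOn (hf.injective.prodMap hf.injective).injOn,
    Multiset.map_map]
  exact Multiset.map_congr rfl fun p _ => hf.dist_eq p.1 p.2

theorem pairDistMultiset_image_product [DecidableEq A] [DecidableEq B] {f : A → B}
    (hf : Isometry f) (s t : Finset A) :
    pairDistMultiset (s.image f ×ˢ t.image f) = pairDistMultiset (s ×ˢ t) := by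
  rw [← prodMap_image_product, pairDistMultiset_image_prodMap hf]

theorem distMultiset_eq_pairDistMultiset_offDiag [DecidableEq A] (s : Finset A) :
    distMultiset s = pairDistMultiset s.offDiag := by
  rw [distMultiset, pairDistMultiset]
  congr 2
  ext
  simp [and_assoc]

theorem distMultiset_image [DecidableEq A] [DecidableEq B] {f : A → B} (hf : Isometry f)
    (s : Finset A) : distMultiset (s.image f) = distMultiset s := by
  rw [distMultiset_eq_pairDistMultiset_offDiag, distMultiset_eq_pairDistMultiset_offDiag,
    ← image_prodMap_offDiag hf.injective, pairDistMultiset_image_prodMap hf]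

theorem distMultiset_union [DecidableEq A] {s t : Finset A} (h : Disjoint s t) :
    distMultiset (s ∪ t) = distMultiset s + distMultiset t +
      pairDistMultiset (s ×ˢ t) + pairDistMultiset (t ×ˢ s) := by
  have h₁ : Disjoint s.offDiag t.offDiag := by grind [disjoint_left]
  have h₂ : Disjoint (s.offDiag ∪ t.offDiag) (s ×ˢ t) := by grind [disjoint_left]
  have h₃ : Disjoint (s.offDiag ∪ t.offDiag ∪ s ×ˢ t) (t ×ˢ s) := by grind [disjoint_left]
  simp only [distMultiset_eq_pairDistMultiset_offDiag, offDiag_union h,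
    pairDistMultiset_union h₁, pairDistMultiset_union h₂, pairDistMultiset_union h₃]

theorem pairDistMultiset_union_product [DecidableEq A] {s s' t : Finset A}
    (h : Disjoint s s') : pairDistMultiset ((s ∪ s') ×ˢ t) =
      pairDistMultiset (s ×ˢ t) + pairDistMultiset (s' ×ˢ t) := by
  rw [union_product, pairDistMultiset_union (disjoint_product.2 (Or.inl h))]

theorem pairDistMultiset_product_union [DecidableEq A] {s t t' : Finset A}
    (h : Disjoint t t') : pairDistMultiset (s ×ˢ (t ∪ t')) =
      pairDistMultiset (s ×ˢ t) + pairDistMultiset (s ×ˢ t') := by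
  rw [product_union, pairDistMultiset_union (disjoint_product.2 (Or.inr h))]

end PairDistMultiset

theorem involution_pair_homometric_general {A : Type*} [MetricSpace A] [DecidableEq A]
    (α₁ α₂ : A ≃ᵢ A)
    (X₁ X₂ P₁ P₂ : Finset A)
    (h₁₂ : Disjoint X₁ X₂) (h₁P₁ : Disjoint X₁ P₁) (h₁P₂ : Disjoint X₁ P₂)
    (h₂P₁ : Disjoint X₂ P₁) (h₂P₂ : Disjoint X₂ P₂)
    (hX₁ : X₁.image α₁ = X₁) (hX₂ : X₂.image α₂ = X₂)
    (hP₁ : P₁.image α₁ = P₂) (hP₂ : P₁.image α₂ = P₂) :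
    distMultiset (X₁ ∪ X₂ ∪ P₁) = distMultiset (X₁ ∪ X₂ ∪ P₂) := by
  have hP : distMultiset P₂ = distMultiset P₁ := by
    simpa only [hP₁] using distMultiset_image α₁.isometry P₁
  have hXP₁ : pairDistMultiset (X₁ ×ˢ P₂) = pairDistMultiset (X₁ ×ˢ P₁) := by
    simpa only [hX₁, hP₁] using pairDistMultiset_image_product α₁.isometry X₁ P₁
  have hPX₁ : pairDistMultiset (P₂ ×ˢ X₁) = pairDistMultiset (P₁ ×ˢ X₁) := by
    simpa only [hX₁, hP₁] using pairDistMultiset_image_product α₁.isometry P₁ X₁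
  have hXP₂ : pairDistMultiset (X₂ ×ˢ P₂) = pairDistMultiset (X₂ ×ˢ P₁) := by
    simpa only [hX₂, hP₂] using pairDistMultiset_image_product α₂.isometry X₂ P₁
  have hPX₂ : pairDistMultiset (P₂ ×ˢ X₂) = pairDistMultiset (P₁ ×ˢ X₂) := by
    simpa only [hX₂, hP₂] using pairDistMultiset_image_product α₂.isometry P₁ X₂
  rw [distMultiset_union (disjoint_union_left.2 ⟨h₁P₁, h₂P₁⟩),
    distMultiset_union (disjoint_union_left.2 ⟨h₁P₂, h₂P₂⟩),
    pairDistMultiset_union_product h₁₂, pairDistMultiset_union_product h₁₂,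
    pairDistMultiset_product_union h₁₂, pairDistMultiset_product_union h₁₂,
    hP, hXP₁, hPX₁, hXP₂, hPX₂]

/-- Construction of homometric pairs via a pair of isometric involutions:
if `α_i` fixes `X_i` setwise and exchanges `P₁` with `P₂`, and
`X₁, X₂, P₁, P₂` are pairwise disjoint, then `C₁ = X₁ ∪ X₂ ∪ P₁` and
`C₂ = X₁ ∪ X₂ ∪ P₂` have the same multiset of pairwise distances. -/
theorem involution_pair_homometric {A : Type*} [MetricSpace A] [DecidableEq A]
    (α₁ α₂ : A ≃ᵢ A) (hα₁ : ∀ a, α₁ (α₁ a) = a) (hα₂ : ∀ a, α₂ (α₂ a) = a)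
    (X₁ X₂ P₁ P₂ : Finset A)
    (h₁₂ : Disjoint X₁ X₂) (h₁P₁ : Disjoint X₁ P₁) (h₁P₂ : Disjoint X₁ P₂)
    (h₂P₁ : Disjoint X₂ P₁) (h₂P₂ : Disjoint X₂ P₂) (hP : Disjoint P₁ P₂)
    (hX₁ : X₁.image α₁ = X₁) (hX₂ : X₂.image α₂ = X₂)
    (hP₁ : P₁.image α₁ = P₂) (hP₂ : P₁.image α₂ = P₂) :
    distMultiset (X₁ ∪ X₂ ∪ P₁) = distMultiset (X₁ ∪ X₂ ∪ P₂) :=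
  involution_pair_homometric_general α₁ α₂ X₁ X₂ P₁ P₂ h₁₂ h₁P₁ h₁P₂ h₂P₁ h₂P₂ hX₁ hX₂ hP₁ hP₂
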